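/- Let T be a bounded linear operator on H admitting an A-adjoint T♯. Then for every nonzero complex number α, (w_A(T))² ≤ ( (1/2)·max{1, |1 − α|}·‖T♯T + TT♯‖_A + w_A(T²) ) / |α|. -/

import Mathlib

noncomputable section

open scoped ComplexInnerProductSpace

variable {H : Type*} [NormedAddCommGroup H] [InnerProductSpace ℂ H] [CompleteSpace H]

/-- The semi-inner product induced by a positive operator `A`:
`⟨x,y⟩_A = ⟨Ax,y⟩` (linear in the first argument, following the paper's convention). -/
def innerA (A : H →L[ℂ] H) (x y : H) : ℂ := ⟪y, A x⟫

/-- The seminorm induced by `A`: `‖x‖_A = ⟨Ax,x⟩^{1/2}`. -/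
def normA (A : H →L[ℂ] H) (x : H) : ℝ := Real.sqrt (innerA A x x).re

/-- The `A`-numerical radius `w_A(T) = sup { |⟨Tx,x⟩_A| : ‖x‖_A = 1 }`. -/
def wA (A T : H →L[ℂ] H) : ℝ :=
  sSup {r : ℝ | ∃ x : H, normA A x = 1 ∧ r = ‖innerA A (T x) x‖}

/-- The `A`-Crawford number `c_A(T) = inf { |⟨Tx,x⟩_A| : ‖x‖_A = 1 }`. -/
def cA (A T : H →L[ℂ] H) : ℝ :=
  sInf {r : ℝ | ∃ x : H, normA A x = 1 ∧ r = ‖innerA A (T x) x‖}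

/-- The `A`-operator seminorm `‖T‖_A = sup { ‖Tx‖_A : ‖x‖_A = 1 }`. -/
def opNormA (A T : H →L[ℂ] H) : ℝ :=
  sSup {r : ℝ | ∃ x : H, normA A x = 1 ∧ r = normA A (T x)}

/-- The `A`-Euclidean operator radius of the pair `(B, C)`. -/
def wAe (A B C : H →L[ℂ] H) : ℝ :=
  sSup {r : ℝ | ∃ x : H, normA A x = 1 ∧
    r = Real.sqrt ((‖innerA A (B x) x‖)^2 + (‖innerA A (C x) x‖)^2)}

/-- The `A`-Euclidean operator seminorm of the pair `(B, C)`. -/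
def normAe (A B C : H →L[ℂ] H) : ℝ :=
  sSup {r : ℝ | ∃ x : H, normA A x = 1 ∧
    r = Real.sqrt ((normA A (B x))^2 + (normA A (C x))^2)}

/-- `Re_A(T) = (T + T♯)/2`, where `Ts` is an `A`-adjoint of `T`. -/
def ReA (T Ts : H →L[ℂ] H) : H →L[ℂ] H := (2 : ℂ)⁻¹ • (T + Ts)

/-- `Im_A(T) = (T - T♯)/(2i)`, where `Ts` is an `A`-adjoint of `T`. -/
def ImA (T Ts : H →L[ℂ] H) : H →L[ℂ] H := (2 * Complex.I)⁻¹ • (T - Ts)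

/-!
Fix `x` with `‖x‖_A = 1` and put `β = ⟨Tx, x⟩_A`. Writing `A = B* B` turns `⟨·,·⟩_A` into the
inner product of `B`-images, so with `e = Bx`, `p = BTx`, `q = BT♯x` one has `⟨q, e⟩ = ⟨e, p⟩ = β`,
`⟨q, p⟩ = ⟨T²x, x⟩_A` and `‖p‖² + ‖q‖² = Re ⟨(T♯T + TT♯)x, x⟩_A`. The identity
`αβ² = ⟨q, p⟩ + (α - 1)β² - (⟨q, p⟩ - β²)` together with the refined Cauchy–Schwarz inequality
`|⟨q, e⟩| |⟨e, p⟩| + |⟨q, p⟩ - ⟨q, e⟩⟨e, p⟩| ≤ ‖q‖ ‖p‖` for a unit vector `e` gives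
`|α| |β|² ≤ |⟨T²x, x⟩_A| + max{1, |1 - α|} (‖p‖² + ‖q‖²) / 2`.
The suprema defining `w_A` and `‖·‖_A` are finite because an operator with an `A`-adjoint is
`A`-bounded, by Reid's inequality `‖Qx‖_A ≤ ‖Q‖ ‖x‖_A` for `A`-selfadjoint `Q`, proved by the power
trick.
-/

open ContinuousLinearMap
open scoped InnerProductSpace

section InnerProductSpace

variable {𝕜 E : Type*} [RCLike 𝕜] [NormedAddCommGroup E] [InnerProductSpace 𝕜 E] {e : E}

theorem norm_sub_inner_smul_sq (he : ‖e‖ = 1) (p : E) :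
    ‖p - ⟪e, p⟫_𝕜 • e‖ ^ 2 = ‖p‖ ^ 2 - ‖⟪e, p⟫_𝕜‖ ^ 2 := by
  have hp : ⟪p, ⟪e, p⟫_𝕜 • e⟫_𝕜 = ((‖⟪e, p⟫_𝕜‖ ^ 2 : ℝ) : 𝕜) := by
    rw [inner_smul_right, ← inner_conj_symm p e, RCLike.mul_conj, RCLike.ofReal_pow]
  rw [@norm_sub_sq 𝕜, hp, RCLike.ofReal_re, norm_smul, he]
  ring

theorem inner_sub_inner_smul (he : ‖e‖ = 1) (p q : E) :
    ⟪q - ⟪e, q⟫_𝕜 • e, p - ⟪e, p⟫_𝕜 • e⟫_𝕜 = ⟪q, p⟫_𝕜 - ⟪q, e⟫_𝕜 * ⟪e, p⟫_𝕜 := by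
  have hee : ⟪e, e⟫_𝕜 = 1 := by rw [inner_self_eq_norm_sq_to_K, he]; simp
  simp only [inner_sub_left, inner_sub_right, inner_smul_left, inner_smul_right, inner_conj_symm,
    hee]
  ring

theorem norm_inner_mul_norm_inner_add_norm_inner_sub_le (he : ‖e‖ = 1) (p q : E) :
    ‖⟪q, e⟫_𝕜‖ * ‖⟪e, p⟫_𝕜‖ + ‖⟪q, p⟫_𝕜 - ⟪q, e⟫_𝕜 * ⟪e, p⟫_𝕜‖ ≤ ‖q‖ * ‖p‖ := by
  have hcs := norm_inner_le_norm (𝕜 := 𝕜) (q - ⟪e, q⟫_𝕜 • e) (p - ⟪e, p⟫_𝕜 • e)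
  rw [inner_sub_inner_smul he] at hcs
  have hp := norm_sub_inner_smul_sq (𝕜 := 𝕜) he p
  have hq := norm_sub_inner_smul_sq (𝕜 := 𝕜) he q
  rw [norm_inner_symm q e]
  calc _ ≤ ‖⟪e, q⟫_𝕜‖ * ‖⟪e, p⟫_𝕜‖ + ‖q - ⟪e, q⟫_𝕜 • e‖ * ‖p - ⟪e, p⟫_𝕜 • e‖ := by gcongr
    _ ≤ ‖q‖ * ‖p‖ := by
      refine (abs_le_of_sq_le_sq' ?_ (by positivity)).2
      rw [mul_pow, eq_add_of_sub_eq' hp.symm, eq_add_of_sub_eq' hq.symm]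
      nlinarith [sq_nonneg (‖⟪e, q⟫_𝕜‖ * ‖p - ⟪e, p⟫_𝕜 • e‖ - ‖q - ⟪e, q⟫_𝕜 • e‖ * ‖⟪e, p⟫_𝕜‖)]

theorem norm_mul_norm_inner_sq_le (he : ‖e‖ = 1) {p q : E} (hpq : ⟪q, e⟫_𝕜 = ⟪e, p⟫_𝕜)
    (α : 𝕜) :
    ‖α‖ * ‖⟪e, p⟫_𝕜‖ ^ 2 ≤ ‖⟪q, p⟫_𝕜‖ + max 1 ‖1 - α‖ * (‖q‖ * ‖p‖) := by
  set β := ⟪e, p⟫_𝕜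
  have hcs := norm_inner_mul_norm_inner_add_norm_inner_sub_le (𝕜 := 𝕜) he p q
  rw [hpq] at hcs
  have hα : ‖α - 1‖ ≤ max 1 ‖1 - α‖ := norm_sub_rev α 1 ▸ le_max_right _ _
  have hm : 1 ≤ max 1 ‖1 - α‖ := le_max_left _ _
  calc ‖α‖ * ‖β‖ ^ 2 = ‖⟪q, p⟫_𝕜 + (α - 1) * β ^ 2 - (⟪q, p⟫_𝕜 - β * β)‖ := by
        rw [← norm_pow, ← norm_mul]; ring_nf
    _ ≤ ‖⟪q, p⟫_𝕜‖ + ‖α - 1‖ * ‖β‖ ^ 2 + ‖⟪q, p⟫_𝕜 - β * β‖ := by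
        grw [norm_sub_le, norm_add_le, norm_mul, norm_pow]
    _ ≤ ‖⟪q, p⟫_𝕜‖ + max 1 ‖1 - α‖ * (‖β‖ * ‖β‖ + ‖⟪q, p⟫_𝕜 - β * β‖) := by
        nlinarith [norm_nonneg β, norm_nonneg (⟪q, p⟫_𝕜 - β * β)]
    _ ≤ ‖⟪q, p⟫_𝕜‖ + max 1 ‖1 - α‖ * (‖q‖ * ‖p‖) := by gcongr

end InnerProductSpace

theorem le_of_forall_pow_two_pow_le_mul {t c K : ℝ} (hc : 0 ≤ c)
    (h : ∀ n : ℕ, t ^ 2 ^ n ≤ K * c ^ 2 ^ n) : t ≤ c := by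
  by_contra! hct
  obtain rfl | hc := hc.eq_or_lt
  · simpa [hct.not_ge] using h 0
  · have hq : 1 < t / c := (one_lt_div hc).mpr hct
    obtain ⟨n, hn⟩ := pow_unbounded_of_one_lt K hq
    have hK : (t / c) ^ 2 ^ n ≤ K := by
      rw [div_pow, div_le_iff₀ (by positivity)]
      exact h n
    exact hn.not_ge ((pow_le_pow_right₀ hq.le Nat.lt_two_pow_self.le).trans hK)

section Seminorm

omit [CompleteSpace H]

variable {A B S Ss R Rs Q : H →L[ℂ] H}

theorem normA_nonneg (x : H) : 0 ≤ normA A x := Real.sqrt_nonneg _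

theorem wA_nonneg (A T : H →L[ℂ] H) : 0 ≤ wA A T :=
  Real.sSup_nonneg (by rintro _ ⟨x, -, rfl⟩; positivity)

theorem opNormA_nonneg (A T : H →L[ℂ] H) : 0 ≤ opNormA A T :=
  Real.sSup_nonneg (by rintro _ ⟨x, -, rfl⟩; exact normA_nonneg _)

theorem wA_sq_le {T : H →L[ℂ] H} {c : ℝ} (hc : 0 ≤ c)
    (h : ∀ x, normA A x = 1 → ‖innerA A (T x) x‖ ^ 2 ≤ c) : wA A T ^ 2 ≤ c := by
  have hw : wA A T ≤ √c :=
    Real.sSup_le (by rintro _ ⟨x, hx, rfl⟩; exact Real.le_sqrt_of_sq_le (h x hx))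
      (Real.sqrt_nonneg c)
  calc wA A T ^ 2 ≤ √c ^ 2 := by gcongr; exact wA_nonneg A T
    _ = c := Real.sq_sqrt hc

theorem normA_eq_norm (hB : ∀ x y, innerA A x y = ⟪B y, B x⟫) (x : H) :
    normA A x = ‖B x‖ := by
  rw [normA, hB, inner_self_eq_norm_sq_to_K]
  norm_cast
  exact Real.sqrt_sq (norm_nonneg _)

def IsAAdjoint (A S Ss : H →L[ℂ] H) : Prop :=
  ∀ x y, innerA A (S x) y = innerA A x (Ss y)

theorem IsAAdjoint.mul (hS : IsAAdjoint A S Ss) (hR : IsAAdjoint A R Rs) :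
    IsAAdjoint A (S * R) (Rs * Ss) := fun x y => by
  rw [mul_apply_eq_comp, mul_apply_eq_comp, hS, hR]

theorem IsAAdjoint.add (hS : IsAAdjoint A S Ss) (hR : IsAAdjoint A R Rs) :
    IsAAdjoint A (S + R) (Ss + Rs) := fun x y => by
  have hS' := hS x y
  have hR' := hR x y
  simp only [innerA] at hS' hR' ⊢
  simp only [add_apply, map_add, inner_add_left, inner_add_right, hS', hR']

theorem IsAAdjoint.pow (hQ : IsAAdjoint A Q Q) (n : ℕ) : IsAAdjoint A (Q ^ n) (Q ^ n) := by
  induction n with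
  | zero => exact fun x y => rfl
  | succ n ih =>
    have h := ih.mul hQ
    rwa [← pow_succ, ← pow_succ'] at h

end Seminorm

section PositiveOperator

variable {A S Ss Q T Ts : H →L[ℂ] H}

theorem exists_innerA_eq_inner (hA : A.IsPositive) :
    ∃ B : H →L[ℂ] H, ∀ x y, innerA A x y = ⟪B y, B x⟫ := by
  obtain ⟨B, rfl⟩ :=
    CStarAlgebra.nonneg_iff_eq_star_mul_self.mp ((nonneg_iff_isPositive A).mpr hA)
  exact ⟨B, fun x y => by rw [innerA, star_eq_adjoint, mul_apply_eq_comp, adjoint_inner_right]⟩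

theorem norm_innerA_le (hA : A.IsPositive) (x y : H) :
    ‖innerA A x y‖ ≤ normA A x * normA A y := by
  obtain ⟨B, hB⟩ := exists_innerA_eq_inner hA
  rw [hB, normA_eq_norm hB, normA_eq_norm hB, mul_comm]
  exact norm_inner_le_norm _ _

theorem re_innerA_self (hA : A.IsPositive) (x : H) : (innerA A x x).re = normA A x ^ 2 := by
  obtain ⟨B, hB⟩ := exists_innerA_eq_inner hA
  rw [hB, normA_eq_norm hB, inner_self_eq_norm_sq_to_K]
  norm_cast

theorem conj_innerA (hA : A.IsPositive) (x y : H) :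
    starRingEnd ℂ (innerA A x y) = innerA A y x := by
  obtain ⟨B, hB⟩ := exists_innerA_eq_inner hA
  rw [hB, hB, inner_conj_symm]

theorem exists_normA_le_mul_norm (hA : A.IsPositive) :
    ∃ C, 0 ≤ C ∧ ∀ x, normA A x ≤ C * ‖x‖ := by
  obtain ⟨B, hB⟩ := exists_innerA_eq_inner hA
  exact ⟨‖B‖, norm_nonneg B, fun x => (normA_eq_norm hB x).trans_le (B.le_opNorm x)⟩

theorem isAAdjoint_of_comp_eq (hA : A.IsPositive) (h : A.comp Ss = (adjoint S).comp A) :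
    IsAAdjoint A S Ss := fun x y =>
  calc ⟪y, A (S x)⟫ = ⟪A y, S x⟫ := (hA.isSymmetric y (S x)).symm
    _ = ⟪A (Ss y), x⟫ := by rw [← adjoint_inner_left, ← comp_apply, ← h, comp_apply]
    _ = ⟪Ss y, A x⟫ := hA.isSymmetric _ _

theorem IsAAdjoint.symm (hA : A.IsPositive) (h : IsAAdjoint A S Ss) : IsAAdjoint A Ss S :=
  fun x y => by rw [← conj_innerA hA, ← h, conj_innerA hA]

theorem normA_sq_le_of_isAAdjoint_self (hA : A.IsPositive) (hQ : IsAAdjoint A Q Q) (x : H) :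
    normA A (Q x) ^ 2 ≤ normA A (Q (Q x)) * normA A x :=
  calc normA A (Q x) ^ 2 = (innerA A x (Q (Q x))).re := by rw [← re_innerA_self hA, hQ]
    _ ≤ ‖innerA A x (Q (Q x))‖ := Complex.re_le_norm _
    _ ≤ normA A (Q (Q x)) * normA A x := (norm_innerA_le hA _ _).trans_eq (mul_comm _ _)

theorem div_pow_two_pow_le_of_isAAdjoint_self (hA : A.IsPositive) (hQ : IsAAdjoint A Q Q)
    {x : H} (hx : 0 < normA A x) (n : ℕ) :
    (normA A (Q x) / normA A x) ^ 2 ^ n ≤ normA A ((Q ^ 2 ^ n) x) / normA A x := by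
  induction n with
  | zero => simp
  | succ n ih =>
    have hsq := normA_sq_le_of_isAAdjoint_self hA (hQ.pow (2 ^ n)) x
    rw [← mul_apply_eq_comp, ← sq, ← pow_mul, ← pow_succ] at hsq
    calc (normA A (Q x) / normA A x) ^ 2 ^ (n + 1)
        = ((normA A (Q x) / normA A x) ^ 2 ^ n) ^ 2 := by rw [pow_succ, pow_mul]
      _ ≤ (normA A ((Q ^ 2 ^ n) x) / normA A x) ^ 2 := by
        gcongr
        exact pow_nonneg (div_nonneg (normA_nonneg _) hx.le) _
      _ ≤ normA A ((Q ^ 2 ^ (n + 1)) x) / normA A x := by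
        rw [div_pow, div_le_div_iff₀ (by positivity) hx]
        nlinarith

theorem normA_apply_le_of_isAAdjoint_self (hA : A.IsPositive) (hQ : IsAAdjoint A Q Q) (x : H) :
    normA A (Q x) ≤ ‖Q‖ * normA A x := by
  obtain hx | hx := (normA_nonneg (A := A) x).eq_or_lt
  · have h := normA_sq_le_of_isAAdjoint_self hA hQ x
    rw [← hx, mul_zero] at h ⊢
    nlinarith [normA_nonneg (A := A) (Q x)]
  · obtain ⟨C, hC0, hC⟩ := exists_normA_le_mul_norm hA
    have hbound (n : ℕ) :
        (normA A (Q x) / normA A x) ^ 2 ^ n ≤ C * ‖x‖ / normA A x * ‖Q‖ ^ 2 ^ n := by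
      refine (div_pow_two_pow_le_of_isAAdjoint_self hA hQ hx n).trans ?_
      rw [div_mul_eq_mul_div, div_le_div_iff_of_pos_right hx]
      calc normA A ((Q ^ 2 ^ n) x) ≤ C * ‖(Q ^ 2 ^ n) x‖ := hC _
        _ ≤ C * (‖Q‖ ^ 2 ^ n * ‖x‖) := by
          gcongr
          exact (le_opNorm _ _).trans (by gcongr; exact norm_pow_le' Q (by positivity))
        _ = C * ‖x‖ * ‖Q‖ ^ 2 ^ n := by ring
    rw [← div_le_iff₀ hx]
    exact le_of_forall_pow_two_pow_le_mul (norm_nonneg Q) hbound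

theorem normA_apply_le (hA : A.IsPositive) (hS : IsAAdjoint A S Ss) (x : H) :
    normA A (S x) ≤ √‖Ss * S‖ * normA A x := by
  have hQ : IsAAdjoint A (Ss * S) (Ss * S) := (hS.symm hA).mul hS
  refine le_of_pow_le_pow_left₀ two_ne_zero
    (mul_nonneg (Real.sqrt_nonneg _) (normA_nonneg x)) ?_
  calc normA A (S x) ^ 2 = (innerA A x ((Ss * S) x)).re := by
        rw [← re_innerA_self hA, hS]; rfl
    _ ≤ normA A x * normA A ((Ss * S) x) :=
      (Complex.re_le_norm _).trans (norm_innerA_le hA _ _)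
    _ ≤ normA A x * (‖Ss * S‖ * normA A x) :=
      mul_le_mul_of_nonneg_left (normA_apply_le_of_isAAdjoint_self hA hQ x) (normA_nonneg x)
    _ = (√‖Ss * S‖ * normA A x) ^ 2 := by rw [mul_pow, Real.sq_sqrt (norm_nonneg _)]; ring

theorem norm_innerA_apply_le_normA (hA : A.IsPositive) {x : H} (hx : normA A x = 1) :
    ‖innerA A (S x) x‖ ≤ normA A (S x) :=
  (norm_innerA_le hA _ _).trans_eq (by rw [hx, mul_one])

theorem normA_le_opNormA (hA : A.IsPositive) (hS : IsAAdjoint A S Ss) {x : H}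
    (hx : normA A x = 1) : normA A (S x) ≤ opNormA A S :=
  le_csSup ⟨√‖Ss * S‖, by rintro _ ⟨y, hy, rfl⟩; simpa [hy] using normA_apply_le hA hS y⟩
    ⟨x, hx, rfl⟩

theorem norm_innerA_le_wA (hA : A.IsPositive) (hS : IsAAdjoint A S Ss) {x : H}
    (hx : normA A x = 1) : ‖innerA A (S x) x‖ ≤ wA A S :=
  le_csSup ⟨√‖Ss * S‖, by
    rintro _ ⟨y, hy, rfl⟩
    simpa [hy] using (norm_innerA_apply_le_normA hA hy).trans (normA_apply_le hA hS y)⟩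
    ⟨x, hx, rfl⟩

theorem norm_mul_norm_innerA_sq_le (hA : A.IsPositive) (hT : IsAAdjoint A T Ts) (α : ℂ) {x : H}
    (hx : normA A x = 1) :
    ‖α‖ * ‖innerA A (T x) x‖ ^ 2
      ≤ ‖innerA A ((T * T) x) x‖ + max 1 ‖1 - α‖ * (normA A (Ts x) * normA A (T x)) := by
  obtain ⟨B, hB⟩ := exists_innerA_eq_inner hA
  have he : ‖B x‖ = 1 := by rw [← normA_eq_norm hB, hx]
  have hqe : ⟪B (Ts x), B x⟫_ℂ = ⟪B x, B (T x)⟫_ℂ := by rw [← hB, ← hB, hT]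
  have hqp : ⟪B (Ts x), B (T x)⟫_ℂ = innerA A ((T * T) x) x := by
    rw [← hB, mul_apply_eq_comp, hT (T x) x]
  have h := norm_mul_norm_inner_sq_le he hqe α
  rwa [hqp, ← hB, ← normA_eq_norm hB, ← normA_eq_norm hB] at h

theorem normA_sq_add_normA_sq_le (hA : A.IsPositive) (hT : IsAAdjoint A T Ts) {x : H}
    (hx : normA A x = 1) :
    normA A (Ts x) ^ 2 + normA A (T x) ^ 2 ≤ normA A ((Ts * T + T * Ts) x) := by
  have hD : innerA A ((Ts * T + T * Ts) x) x
      = innerA A (T x) (T x) + innerA A (Ts x) (Ts x) := by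
    rw [← hT.symm hA, ← hT]
    simp only [innerA, add_apply, mul_apply_eq_comp, map_add, inner_add_right]
  calc normA A (Ts x) ^ 2 + normA A (T x) ^ 2 = (innerA A ((Ts * T + T * Ts) x) x).re := by
        rw [hD, Complex.add_re, re_innerA_self hA, re_innerA_self hA, add_comm]
    _ ≤ ‖innerA A ((Ts * T + T * Ts) x) x‖ := Complex.re_le_norm _
    _ ≤ normA A ((Ts * T + T * Ts) x) := norm_innerA_apply_le_normA hA hx

end PositiveOperator

theorem stmt12_general (A : H →L[ℂ] H) (hA : A.IsPositive)
    (T Ts : H →L[ℂ] H)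
    (hT : A.comp Ts = (ContinuousLinearMap.adjoint T).comp A)
    (α : ℂ) (hα : α ≠ 0) :
    (wA A T)^2
      ≤ ((1/2) * max 1 (‖1 - α‖) * opNormA A (Ts * T + T * Ts)
          + wA A (T * T)) / ‖α‖ := by
  have hT : IsAAdjoint A T Ts := isAAdjoint_of_comp_eq hA hT
  have hD : IsAAdjoint A (Ts * T + T * Ts) (Ts * T + T * Ts) :=
    ((hT.symm hA).mul hT).add (hT.mul (hT.symm hA))
  have hN : 0 ≤ (1 / 2) * max 1 ‖1 - α‖ * opNormA A (Ts * T + T * Ts) + wA A (T * T) :=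
    add_nonneg (mul_nonneg (by positivity) (opNormA_nonneg _ _)) (wA_nonneg _ _)
  refine wA_sq_le (div_nonneg hN (norm_nonneg α)) fun x hx => ?_
  rw [le_div_iff₀' (norm_pos_iff.mpr hα)]
  calc ‖α‖ * ‖innerA A (T x) x‖ ^ 2
      ≤ ‖innerA A ((T * T) x) x‖ + max 1 ‖1 - α‖ * (normA A (Ts x) * normA A (T x)) :=
        norm_mul_norm_innerA_sq_le hA hT α hx
    _ ≤ wA A (T * T) + max 1 ‖1 - α‖ * ((1 / 2) * opNormA A (Ts * T + T * Ts)) := by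
        gcongr ?_ + _ * ?_
        · exact norm_innerA_le_wA hA (hT.mul hT) hx
        · nlinarith [two_mul_le_add_sq (normA A (Ts x)) (normA A (T x)),
            normA_sq_add_normA_sq_le hA hT hx, normA_le_opNormA hA hD hx]
    _ = _ := by ring

theorem stmt12 (A : H →L[ℂ] H) (hA : A.IsPositive) (hA0 : A ≠ 0)
    (T Ts : H →L[ℂ] H)
    (hT : A.comp Ts = (ContinuousLinearMap.adjoint T).comp A)
    (α : ℂ) (hα : α ≠ 0) :
    (wA A T)^2
      ≤ ((1/2) * max 1 (‖1 - α‖) * opNormA A (Ts * T + T * Ts)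
          + wA A (T * T)) / ‖α‖ :=
  stmt12_general A hA T Ts hT α hα
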